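/- An (r,s)-loom (A,B) is decomposable if and only if at least one of A, B is not connected, where a hypergraph is connected if the graph on its vertices formed by all pairs contained in a common edge is connected. -/

import Mathlib

open Finset

variable {V : Type*} [DecidableEq V]

/-- The vertex set of a hypergraph: the union of its edges. -/
def vertsH (H : Set (Finset V)) : Set V := ⋃ e ∈ H, (e : Set V)

/-- `c` is a cover of the hypergraph `H`: it meets every edge. -/
def IsCoverH (H : Set (Finset V)) (c : Finset V) : Prop := ∀ e ∈ H, (c ∩ e).Nonempty

/-- The covering number of `H` equals `k`. -/
def CoverNumIs (H : Set (Finset V)) (k : ℕ) : Prop :=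
  (∃ c, IsCoverH H c ∧ c.card = k) ∧ ∀ c, IsCoverH H c → k ≤ c.card

/-- `Ck H k` is the set of covers of `H` of size exactly `k`. -/
def Ck (H : Set (Finset V)) (k : ℕ) : Set (Finset V) := {c | c.card = k ∧ IsCoverH H c}

/-- `H` is `r`-uniform. -/
def UniformH (H : Set (Finset V)) (r : ℕ) : Prop := ∀ e ∈ H, e.card = r

/-- Orthogonality of hypergraphs: every pair of edges meets in exactly one vertex. -/
def OrthH (A B : Set (Finset V)) : Prop := ∀ a ∈ A, ∀ b ∈ B, (a ∩ b).card = 1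

/-- An `(r,s)`-loom. -/
def IsLoom (r s : ℕ) (A B : Set (Finset V)) : Prop :=
  1 ≤ r ∧ 1 ≤ s ∧ OrthH A B ∧ UniformH A r ∧ UniformH B s ∧
    CoverNumIs A s ∧ CoverNumIs B r ∧ A = Ck B r ∧ B = Ck A s
/-- The join of two hypergraphs. -/
def joinH (A C : Set (Finset V)) : Set (Finset V) := {x | ∃ a ∈ A, ∃ c ∈ C, x = a ∪ c}
/-- The 1-skeleton of a hypergraph: two vertices are adjacent if distinct
and contained in a common edge. -/
def hGraph (H : Set (Finset V)) : SimpleGraph V where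
  Adj u v := u ≠ v ∧ ∃ e ∈ H, u ∈ e ∧ v ∈ e
  symm := by
    constructor
    rintro u v ⟨huv, e, he, hu, hv⟩
    exact ⟨huv.symm, e, he, hv, hu⟩
  loopless := by
    constructor
    rintro v ⟨hv, -⟩
    exact hv rfl

/-- A hypergraph is connected if its 1-skeleton is connected on its vertex set. -/
def ConnH (H : Set (Finset V)) : Prop :=
  ∀ u ∈ vertsH H, ∀ v ∈ vertsH H, (hGraph H).Reachable u v
/-- A pair of hypergraphs is decomposable if it is a 1-composition or a
2-composition of two looms on disjoint vertex sets. -/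
def Decomposable (A B : Set (Finset V)) : Prop :=
  (∃ (a c b : ℕ) (A1 B1 A2 B2 : Set (Finset V)),
      IsLoom a b A1 B1 ∧ IsLoom c b A2 B2 ∧
      Disjoint (vertsH A1 ∪ vertsH B1) (vertsH A2 ∪ vertsH B2) ∧
      A = joinH A1 A2 ∧ B = B1 ∪ B2) ∨
  (∃ (a b d : ℕ) (A1 B1 A2 B2 : Set (Finset V)),
      IsLoom a b A1 B1 ∧ IsLoom a d A2 B2 ∧
      Disjoint (vertsH A1 ∪ vertsH B1) (vertsH A2 ∪ vertsH B2) ∧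
      A = A1 ∪ A2 ∧ B = joinH B1 B2)


/-!
A 1-composition has `B = B₁ ∪ B₂` with `B₁`, `B₂` nonempty on disjoint vertex sets, so `B` is
disconnected; dually a 2-composition disconnects `A`.

Conversely, if `B` is disconnected, let `B₁` be the edges inside one component and `B₂` the rest.
Minimum covers of a vertex-disjoint union are exactly the unions of minimum covers of the parts,
so `τ(B) = τ(B₁) + τ(B₂)` and `A = C_r(B)` is the join of `Aᵢ = C_{τ(Bᵢ)}(Bᵢ)`. Each `(Aᵢ, Bᵢ)` is
a loom: orthogonality comes from `A` after padding `a ∈ A₁` with a minimum cover of `B₂`; every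
cover of `A₁` covers `A`, hence has size at least `s`; and an `s`-set covering `A₁` lies in
`C_s(A) = B` and meets the vertex set of `B₁`, hence lies in `B₁`. Disconnected `A` is the same
argument for the loom `(B, A)`.
-/

section Hypergraph

variable {α : Type*} {H H₁ H₂ : Set (Finset α)}

lemma mem_vertsH {x : α} : x ∈ vertsH H ↔ ∃ e ∈ H, x ∈ e := by
  simp [vertsH]

lemma vertsH_union : vertsH (H₁ ∪ H₂) = vertsH H₁ ∪ vertsH H₂ := by
  ext x
  simp only [mem_vertsH, Set.mem_union, or_and_right, exists_or]

lemma coe_subset_vertsH {e : Finset α} (he : e ∈ H) : (e : Set α) ⊆ vertsH H :=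
  fun _ hx => mem_vertsH.2 ⟨e, he, hx⟩

lemma disjoint_of_coe_subset_vertsH {c₁ c₂ : Finset α}
    (hd : Disjoint (vertsH H₁) (vertsH H₂))
    (h₁ : (c₁ : Set α) ⊆ vertsH H₁) (h₂ : (c₂ : Set α) ⊆ vertsH H₂) : Disjoint c₁ c₂ :=
  Finset.disjoint_coe.1 (hd.mono h₁ h₂)

lemma reachable_of_mem_edge {e : Finset α} (he : e ∈ H) {x y : α} (hx : x ∈ e) (hy : y ∈ e) :
    (hGraph H).Reachable x y := by
  by_cases hxy : x = y
  · exact hxy ▸ .rfl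
  · exact SimpleGraph.Adj.reachable ⟨hxy, e, he, hx, hy⟩

lemma mem_vertsH_of_reachable_of_disjoint (hd : Disjoint (vertsH H₁) (vertsH H₂)) {x y : α}
    (hxy : (hGraph (H₁ ∪ H₂)).Reachable x y) (hx : x ∈ vertsH H₁) : y ∈ vertsH H₁ := by
  obtain ⟨w⟩ := hxy
  induction w with
  | nil => exact hx
  | cons hadj _ ih =>
    obtain ⟨-, e, he | he, hue, hve⟩ := hadj
    · exact ih (coe_subset_vertsH he hve)
    · exact absurd hx (Set.disjoint_right.1 hd (coe_subset_vertsH he hue))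

lemma not_connH_union (hd : Disjoint (vertsH H₁) (vertsH H₂))
    (h₁ : (vertsH H₁).Nonempty) (h₂ : (vertsH H₂).Nonempty) : ¬ ConnH (H₁ ∪ H₂) := by
  intro hc
  obtain ⟨u, hu⟩ := h₁
  obtain ⟨v, hv⟩ := h₂
  have huv := hc u (vertsH_union ▸ Or.inl hu) v (vertsH_union ▸ Or.inr hv)
  exact Set.disjoint_left.1 hd (mem_vertsH_of_reachable_of_disjoint hd huv hu) hv

lemma exists_split_of_not_connH (h : ¬ ConnH H) : ∃ H₁ H₂, H = H₁ ∪ H₂ ∧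
    Disjoint (vertsH H₁) (vertsH H₂) ∧ H₁.Nonempty ∧ H₂.Nonempty := by
  simp only [ConnH, not_forall] at h
  obtain ⟨u, hu, v, hv, huv⟩ := h
  set C : Set α := {x | (hGraph H).Reachable u x}
  have hedge : ∀ e ∈ H, ∀ x ∈ e, x ∈ C → (e : Set α) ⊆ C :=
    fun e he x hx hxC y hy => hxC.trans (reachable_of_mem_edge he hx hy)
  refine ⟨{e ∈ H | (e : Set α) ⊆ C}, {e ∈ H | ¬ (e : Set α) ⊆ C}, ?_, ?_, ?_, ?_⟩
  · ext e
    by_cases he : (e : Set α) ⊆ C <;> simp [he]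
  · rw [Set.disjoint_left]
    intro x hx₁ hx₂
    obtain ⟨e₁, ⟨-, he₁C⟩, hxe₁⟩ := mem_vertsH.1 hx₁
    obtain ⟨e₂, ⟨he₂, he₂C⟩, hxe₂⟩ := mem_vertsH.1 hx₂
    exact he₂C (hedge e₂ he₂ x hxe₂ (he₁C hxe₁))
  · obtain ⟨e, he, hue⟩ := mem_vertsH.1 hu
    exact ⟨e, he, hedge e he u hue .rfl⟩
  · obtain ⟨e, he, hve⟩ := mem_vertsH.1 hv
    exact ⟨e, he, fun heC => huv (heC hve)⟩

end Hypergraph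

section Covers

variable {H H₁ H₂ : Set (Finset V)} {c : Finset V} {k k₁ k₂ : ℕ}

lemma isCoverH_union : IsCoverH (H₁ ∪ H₂) c ↔ IsCoverH H₁ c ∧ IsCoverH H₂ c :=
  ⟨fun h => ⟨fun e he => h e (Or.inl he), fun e he => h e (Or.inr he)⟩,
    fun h e he => he.elim (h.1 e) (h.2 e)⟩

lemma IsCoverH.mono {d : Finset V} (hc : IsCoverH H c) (hcd : c ⊆ d) : IsCoverH H d :=
  fun e he => (hc e he).mono (Finset.inter_subset_inter_right hcd)

lemma IsCoverH.exists_subset_vertsH (hc : IsCoverH H c) :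
    ∃ d ⊆ c, IsCoverH H d ∧ (d : Set V) ⊆ vertsH H := by
  classical
  refine ⟨c.filter (· ∈ vertsH H), Finset.filter_subset _ _, fun e he => ?_, fun x hx => ?_⟩
  · obtain ⟨x, hx⟩ := hc e he
    rw [Finset.mem_inter] at hx
    exact ⟨x, Finset.mem_inter.2 ⟨Finset.mem_filter.2 ⟨hx.1, coe_subset_vertsH he hx.2⟩, hx.2⟩⟩
  · exact (Finset.mem_filter.1 hx).2

lemma exists_coverNumIs (hc : IsCoverH H c) : ∃ k, CoverNumIs H k := by
  classical
  have h : ∃ n, ∃ d, IsCoverH H d ∧ d.card = n := ⟨_, c, hc, rfl⟩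
  exact ⟨Nat.find h, Nat.find_spec h, fun d hd => Nat.find_min' h ⟨d, hd, rfl⟩⟩

lemma CoverNumIs.unique (hk : CoverNumIs H k) (hk' : CoverNumIs H k₁) : k = k₁ := by
  obtain ⟨⟨c, hc, rfl⟩, hmin⟩ := hk
  obtain ⟨⟨c', hc', rfl⟩, hmin'⟩ := hk'
  exact le_antisymm (hmin c' hc') (hmin' c hc)

lemma CoverNumIs.pos (hk : CoverNumIs H k) (hH : H.Nonempty) : 0 < k := by
  obtain ⟨⟨c, hc, rfl⟩, -⟩ := hk
  obtain ⟨e, he⟩ := hH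
  obtain ⟨x, hx⟩ := hc e he
  exact Finset.card_pos.2 ⟨x, (Finset.mem_inter.1 hx).1⟩

lemma CoverNumIs.nonempty (hk : CoverNumIs H k) (hpos : 0 < k) : H.Nonempty := by
  rw [Set.nonempty_iff_ne_empty]
  rintro rfl
  have := hk.2 ∅ fun e he => he.elim
  simp_all

lemma CoverNumIs.coe_subset_vertsH (hk : CoverNumIs H k) (hc : c ∈ Ck H k) :
    (c : Set V) ⊆ vertsH H := by
  obtain ⟨d, hdc, hd, hdV⟩ := hc.2.exists_subset_vertsH
  rwa [Finset.eq_of_subset_of_card_le hdc (hc.1 ▸ hk.2 d hd)] at hdV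

lemma CoverNumIs.vertsH_ck_subset (hk : CoverNumIs H k) : vertsH (Ck H k) ⊆ vertsH H := by
  intro x hx
  obtain ⟨c, hc, hxc⟩ := mem_vertsH.1 hx
  exact hk.coe_subset_vertsH hc hxc

lemma IsCoverH.exists_split (hd : Disjoint (vertsH H₁) (vertsH H₂))
    (hc : IsCoverH (H₁ ∪ H₂) c) :
    ∃ c₁ c₂, IsCoverH H₁ c₁ ∧ IsCoverH H₂ c₂ ∧ Disjoint c₁ c₂ ∧ c₁ ∪ c₂ ⊆ c := by
  obtain ⟨c₁, hc₁c, hc₁, hc₁V⟩ := (isCoverH_union.1 hc).1.exists_subset_vertsH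
  obtain ⟨c₂, hc₂c, hc₂, hc₂V⟩ := (isCoverH_union.1 hc).2.exists_subset_vertsH
  exact ⟨c₁, c₂, hc₁, hc₂, disjoint_of_coe_subset_vertsH hd hc₁V hc₂V,
    Finset.union_subset hc₁c hc₂c⟩

lemma union_mem_ck_union (hd : Disjoint (vertsH H₁) (vertsH H₂))
    (h₁ : CoverNumIs H₁ k₁) (h₂ : CoverNumIs H₂ k₂) {c₁ c₂ : Finset V}
    (hc₁ : c₁ ∈ Ck H₁ k₁) (hc₂ : c₂ ∈ Ck H₂ k₂) : c₁ ∪ c₂ ∈ Ck (H₁ ∪ H₂) (k₁ + k₂) := by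
  refine ⟨?_, isCoverH_union.2 ⟨hc₁.2.mono Finset.subset_union_left,
    hc₂.2.mono Finset.subset_union_right⟩⟩
  rw [Finset.card_union_of_disjoint (disjoint_of_coe_subset_vertsH hd
    (h₁.coe_subset_vertsH hc₁) (h₂.coe_subset_vertsH hc₂)), hc₁.1, hc₂.1]

lemma coverNumIs_union (hd : Disjoint (vertsH H₁) (vertsH H₂))
    (h₁ : CoverNumIs H₁ k₁) (h₂ : CoverNumIs H₂ k₂) : CoverNumIs (H₁ ∪ H₂) (k₁ + k₂) := by
  obtain ⟨c₁, hc₁, hc₁k⟩ := h₁.1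
  obtain ⟨c₂, hc₂, hc₂k⟩ := h₂.1
  have hc := union_mem_ck_union hd h₁ h₂ ⟨hc₁k, hc₁⟩ ⟨hc₂k, hc₂⟩
  refine ⟨⟨_, hc.2, hc.1⟩, fun c hc => ?_⟩
  obtain ⟨d₁, d₂, hd₁, hd₂, hdisj, hsub⟩ := hc.exists_split hd
  calc k₁ + k₂ ≤ d₁.card + d₂.card := add_le_add (h₁.2 d₁ hd₁) (h₂.2 d₂ hd₂)
    _ = (d₁ ∪ d₂).card := (Finset.card_union_of_disjoint hdisj).symm
    _ ≤ c.card := Finset.card_le_card hsub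

lemma ck_union_eq_joinH (hd : Disjoint (vertsH H₁) (vertsH H₂))
    (h₁ : CoverNumIs H₁ k₁) (h₂ : CoverNumIs H₂ k₂) :
    Ck (H₁ ∪ H₂) (k₁ + k₂) = joinH (Ck H₁ k₁) (Ck H₂ k₂) := by
  ext c
  constructor
  · rintro ⟨hck, hc⟩
    obtain ⟨d₁, d₂, hd₁, hd₂, hdisj, hsub⟩ := hc.exists_split hd
    have hcard : (d₁ ∪ d₂).card = d₁.card + d₂.card := Finset.card_union_of_disjoint hdisj
    have h₁le := h₁.2 d₁ hd₁
    have h₂le := h₂.2 d₂ hd₂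
    have hle := Finset.card_le_card hsub
    refine ⟨d₁, ⟨by omega, hd₁⟩, d₂, ⟨by omega, hd₂⟩, ?_⟩
    exact (Finset.eq_of_subset_of_card_le hsub (by omega)).symm
  · rintro ⟨c₁, hc₁, c₂, hc₂, rfl⟩
    exact union_mem_ck_union hd h₁ h₂ hc₁ hc₂

end Covers

section Looms

variable {r s r₁ r₂ : ℕ} {A B B₁ B₂ : Set (Finset V)}

lemma IsLoom.symm (hL : IsLoom r s A B) : IsLoom s r B A := by
  obtain ⟨hr, hs, hAB, hA, hB, hτA, hτB, hAck, hBck⟩ := hL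
  exact ⟨hs, hr, fun b hb a ha => Finset.inter_comm a b ▸ hAB a ha b hb,
    hB, hA, hτB, hτA, hBck, hAck⟩

lemma IsLoom.nonempty_right (hL : IsLoom r s A B) : B.Nonempty := by
  obtain ⟨hr, -, -, -, -, -, hτB, -, -⟩ := hL
  exact hτB.nonempty hr

lemma IsLoom.vertsH_right_nonempty (hL : IsLoom r s A B) : (vertsH B).Nonempty := by
  obtain ⟨b, hb⟩ := hL.nonempty_right
  obtain ⟨-, hs, -, -, hBs, -⟩ := hL
  obtain ⟨x, hx⟩ := Finset.card_pos.1 ((hBs b hb).symm ▸ hs)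
  exact ⟨x, coe_subset_vertsH hb hx⟩

lemma IsLoom.isCoverH_right (hL : IsLoom r s A B) {a : Finset V} (ha : a ∈ A) :
    IsCoverH B a := by
  obtain ⟨-, -, -, -, -, -, -, hAck, -⟩ := hL
  rw [hAck] at ha
  exact ha.2

lemma IsLoom.eq_joinH_of_union (hL : IsLoom r s A B) (hB : B = B₁ ∪ B₂)
    (hd : Disjoint (vertsH B₁) (vertsH B₂)) (h₁ : CoverNumIs B₁ r₁) (h₂ : CoverNumIs B₂ r₂) :
    A = joinH (Ck B₁ r₁) (Ck B₂ r₂) := by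
  obtain ⟨-, -, -, -, -, -, hτB, hAck, -⟩ := hL
  subst hB
  rw [hAck, hτB.unique (coverNumIs_union hd h₁ h₂), ck_union_eq_joinH hd h₁ h₂]

lemma IsLoom.isLoom_ck_of_union (hL : IsLoom r s A B) (hB : B = B₁ ∪ B₂)
    (hd : Disjoint (vertsH B₁) (vertsH B₂)) (hne : B₁.Nonempty)
    (h₁ : CoverNumIs B₁ r₁) (h₂ : CoverNumIs B₂ r₂) : IsLoom r₁ s (Ck B₁ r₁) B₁ := by
  have hA := hL.eq_joinH_of_union hB hd h₁ h₂
  obtain ⟨-, hs, hAB, -, hBs, hτA, -, -, hBck⟩ := hL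
  subst hB
  obtain ⟨c₁, hc₁, hc₁k⟩ := h₁.1
  obtain ⟨c₂, hc₂, hc₂k⟩ := h₂.1
  have horth : OrthH (Ck B₁ r₁) B₁ := by
    intro a ha b hb
    have hc₂b : c₂ ∩ b = ∅ := Finset.disjoint_iff_inter_eq_empty.1
      (disjoint_of_coe_subset_vertsH hd.symm (h₂.coe_subset_vertsH ⟨hc₂k, hc₂⟩)
        (coe_subset_vertsH hb))
    have := hAB (a ∪ c₂) (hA ▸ ⟨a, ha, c₂, ⟨hc₂k, hc₂⟩, rfl⟩) b (Or.inl hb)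
    rwa [Finset.union_inter_distrib_right, hc₂b, Finset.union_empty] at this
  have hcoverA : ∀ c, IsCoverH (Ck B₁ r₁) c → IsCoverH A c := by
    intro c hc a ha
    rw [hA] at ha
    obtain ⟨a₁, ha₁, a₂, -, rfl⟩ := ha
    exact (hc a₁ ha₁).mono (Finset.inter_subset_inter_left Finset.subset_union_left)
  have hB₁cover : ∀ b ∈ B₁, IsCoverH (Ck B₁ r₁) b := fun b hb a ha =>
    Finset.inter_comm a b ▸ Finset.card_pos.1 (by rw [horth a ha b hb]; exact one_pos)
  obtain ⟨b₀, hb₀⟩ := hne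
  refine ⟨h₁.pos ⟨b₀, hb₀⟩, hs, horth, fun a ha => ha.1, fun b hb => hBs b (Or.inl hb),
    ⟨⟨b₀, hB₁cover b₀ hb₀, hBs b₀ (Or.inl hb₀)⟩, fun c hc => hτA.2 c (hcoverA c hc)⟩,
    h₁, rfl, ?_⟩
  ext c
  refine ⟨fun hc => ⟨hBs c (Or.inl hc), hB₁cover c hc⟩, fun ⟨hcs, hc⟩ => ?_⟩
  have hcB : c ∈ B₁ ∪ B₂ := hBck ▸ ⟨hcs, hcoverA c hc⟩
  obtain ⟨x, hx⟩ := hc c₁ ⟨hc₁k, hc₁⟩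
  rw [Finset.mem_inter] at hx
  refine hcB.resolve_right fun hcB₂ => ?_
  exact Set.disjoint_left.1 hd (h₁.coe_subset_vertsH ⟨hc₁k, hc₁⟩ hx.2) (coe_subset_vertsH hcB₂ hx.1)

lemma IsLoom.decomposable_of_not_connH_right (hL : IsLoom r s A B) (h : ¬ ConnH B) :
    Decomposable A B := by
  obtain ⟨B₁, B₂, rfl, hd, hne₁, hne₂⟩ := exists_split_of_not_connH h
  obtain ⟨a, ha⟩ := hL.symm.nonempty_right
  obtain ⟨ha₁, ha₂⟩ := isCoverH_union.1 (hL.isCoverH_right ha)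
  obtain ⟨r₁, h₁⟩ := exists_coverNumIs ha₁
  obtain ⟨r₂, h₂⟩ := exists_coverNumIs ha₂
  refine Or.inl ⟨r₁, r₂, s, Ck B₁ r₁, B₁, Ck B₂ r₂, B₂,
    hL.isLoom_ck_of_union rfl hd hne₁ h₁ h₂,
    hL.isLoom_ck_of_union (Set.union_comm _ _) hd.symm hne₂ h₂ h₁, ?_,
    hL.eq_joinH_of_union rfl hd h₁ h₂, rfl⟩
  exact hd.mono (Set.union_subset h₁.vertsH_ck_subset subset_rfl)
    (Set.union_subset h₂.vertsH_ck_subset subset_rfl)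

lemma Decomposable.symm (h : Decomposable A B) : Decomposable B A := by
  rcases h with ⟨a, c, b, A₁, B₁, A₂, B₂, h₁, h₂, hd, hA, hB⟩ |
    ⟨a, b, d, A₁, B₁, A₂, B₂, h₁, h₂, hd, hA, hB⟩
  · refine Or.inr ⟨b, a, c, B₁, A₁, B₂, A₂, h₁.symm, h₂.symm, ?_, hB, hA⟩
    rwa [Set.union_comm (vertsH B₁), Set.union_comm (vertsH B₂)]
  · refine Or.inl ⟨b, d, a, B₁, A₁, B₂, A₂, h₁.symm, h₂.symm, ?_, hB, hA⟩
    rwa [Set.union_comm (vertsH B₁), Set.union_comm (vertsH B₂)]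

lemma Decomposable.not_connH (h : Decomposable A B) : ¬ ConnH A ∨ ¬ ConnH B := by
  rcases h with ⟨a, c, b, A₁, B₁, A₂, B₂, h₁, h₂, hd, -, rfl⟩ |
    ⟨a, b, d, A₁, B₁, A₂, B₂, h₁, h₂, hd, rfl, -⟩
  · exact Or.inr (not_connH_union (hd.mono Set.subset_union_right Set.subset_union_right)
      h₁.vertsH_right_nonempty h₂.vertsH_right_nonempty)
  · exact Or.inl (not_connH_union (hd.mono Set.subset_union_left Set.subset_union_left)
      h₁.symm.vertsH_right_nonempty h₂.symm.vertsH_right_nonempty)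

end Looms

/-- a loom is decomposable iff one of its components is not
connected. -/
theorem stmt14 (r s : ℕ) (A B : Set (Finset V)) (hL : IsLoom r s A B) :
    Decomposable A B ↔ (¬ ConnH A ∨ ¬ ConnH B) :=
  ⟨Decomposable.not_connH, fun h => h.elim
    (fun hA => (hL.symm.decomposable_of_not_connH_right hA).symm)
    hL.decomposable_of_not_connH_right⟩
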